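/- If the Nyman–Beurling class 𝒩 is dense in L²(0,1), then ζ(z) ≠ 0 for all z with Re(z) > 1/2. -/

import Mathlib

/-!
Zeros with `Re z ≥ 1` are excluded by the classical nonvanishing on that line, so suppose
`ζ(z) = 0` with `1/2 < Re z < 1`. For `0 < θ ≤ 1` and `Re s > 1`, writing
`{θ/x} = θ/x - ⌊θ/x⌋` and `⌊θ/x⌋ = #{n ≥ 1 : x ≤ θ/n}` gives
`∫₀¹ {θ/x} x^(s-1) dx = θ/(s-1) - ζ(s) θ^s / s`, and by analytic continuation this holds for
`Re s > 0`, `s ≠ 1`. At `s = z` the right side is `θ/(z-1)`, so every `f = ∑ cᵢ {βᵢ/x}` with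
`∑ cᵢ βᵢ = 0` has `∫₀¹ f(x) x^(z-1) dx = 0`, whereas `∫₀¹ x^(z-1) dx = 1/z`. Since `x^(z-1)`
lies in `L²(0,1)`, Cauchy–Schwarz gives `|1/z| ≤ ‖1 - f‖₂ ‖x^(z-1)‖₂`, which density makes
arbitrarily small.
-/

open MeasureTheory Set Complex Filter Topology

lemma integral_Ioc_cpow_sub_one {s : ℂ} (hs : 0 < s.re) {c : ℝ} (hc : 0 ≤ c) :
    ∫ x in Ioc 0 c, (x : ℂ) ^ (s - 1) = (c : ℂ) ^ s / s := by
  have hs0 : s ≠ 0 := by rintro rfl; simp at hs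
  rw [← intervalIntegral.integral_of_le hc, integral_cpow (Or.inl (by simpa using hs)),
    sub_add_cancel, ofReal_zero, zero_cpow hs0, sub_zero]

lemma integral_Ioc_rpow_sub_one {r : ℝ} (hr : 0 < r) {c : ℝ} (hc : 0 ≤ c) :
    ∫ x in Ioc 0 c, x ^ (r - 1) = c ^ r / r := by
  rw [← intervalIntegral.integral_of_le hc, integral_rpow (Or.inl (by linarith)), sub_add_cancel,
    Real.zero_rpow hr.ne', sub_zero]

lemma integrableOn_Ioc_cpow_sub_one {s : ℂ} (hs : 0 < s.re) {c : ℝ} :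
    IntegrableOn (fun x : ℝ => (x : ℂ) ^ (s - 1)) (Ioc 0 c) := by
  rcases le_or_gt c 0 with hc | hc
  · simp [Ioc_eq_empty_of_le hc]
  rw [integrableOn_Ioc_iff_integrableOn_Ioo, intervalIntegral.integrableOn_Ioo_cpow_iff hc]
  simpa using hs

lemma mem_Ioc_div_natCast_add_one_iff {θ x : ℝ} (hθ : 0 ≤ θ) (n : ℕ) :
    x ∈ Ioc 0 (θ / (n + 1)) ↔ n < ⌊θ / x⌋₊ := by
  rcases le_or_gt x 0 with hx | hx
  · have hfloor : ⌊θ / x⌋₊ = 0 :=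
      Nat.floor_eq_zero.2 ((div_nonpos_of_nonneg_of_nonpos hθ hx).trans_lt one_pos)
    simp [not_lt.2 hx, hfloor]
  rw [← Nat.add_one_le_iff, Nat.le_floor_iff (by positivity), le_div_iff₀ hx, mem_Ioc,
    le_div_iff₀ (by positivity)]
  push_cast
  simp [hx, mul_comm]

lemma tsum_indicator_Ioc_div_natCast_add_one {M : Type*} [AddCommMonoid M] [TopologicalSpace M]
    {θ : ℝ} (hθ : 0 ≤ θ) (f : ℝ → M) (x : ℝ) :
    ∑' n : ℕ, (Ioc 0 (θ / (n + 1))).indicator f x = ⌊θ / x⌋₊ • f x := by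
  rw [tsum_eq_sum (s := Finset.range ⌊θ / x⌋₊)]
  · rw [← Finset.card_range ⌊θ / x⌋₊, ← Finset.sum_const, Finset.card_range]
    refine Finset.sum_congr rfl fun n hn => ?_
    exact indicator_of_mem ((mem_Ioc_div_natCast_add_one_iff hθ n).2 (Finset.mem_range.1 hn)) f
  · intro n hn
    exact indicator_of_notMem (fun h => hn (Finset.mem_range.2
      ((mem_Ioc_div_natCast_add_one_iff hθ n).1 h))) f

lemma setIntegral_natFloor_div_smul_cpow {θ : ℝ} (hθ0 : 0 < θ) (hθ1 : θ ≤ 1) {s : ℂ}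
    (hs : 1 < s.re) :
    ∫ x in Ioc 0 1, ⌊θ / x⌋₊ • (x : ℂ) ^ (s - 1) = riemannZeta s * (θ : ℂ) ^ s / s := by
  have hs0 : 0 < s.re := by linarith
  set c : ℕ → ℝ := fun n => θ / (n + 1) with hc
  have hc0 n : 0 ≤ c n := by positivity
  have hc1 n : Ioc 0 (c n) ⊆ Ioc 0 1 :=
    Ioc_subset_Ioc_right ((div_le_self hθ0.le (by simp)).trans hθ1)
  set F : ℕ → ℝ → ℂ := fun n => (Ioc 0 (c n)).indicator fun x => (x : ℂ) ^ (s - 1) with hF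
  have hint n : Integrable (F n) (volume.restrict (Ioc 0 1)) :=
    (integrableOn_Ioc_cpow_sub_one hs0).indicator measurableSet_Ioc
  have hintegral n : ∫ x in Ioc 0 1, F n x = (c n : ℂ) ^ s / s := by
    rw [setIntegral_indicator measurableSet_Ioc, inter_eq_right.2 (hc1 n),
      integral_Ioc_cpow_sub_one hs0 (hc0 n)]
  have hnorm n : ∫ x in Ioc 0 1, ‖F n x‖ = c n ^ s.re / s.re := by
    simp only [hF, norm_indicator_eq_indicator_norm]
    rw [setIntegral_indicator measurableSet_Ioc, inter_eq_right.2 (hc1 n),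
      ← integral_Ioc_rpow_sub_one hs0 (hc0 n)]
    refine setIntegral_congr_fun measurableSet_Ioc fun x hx => ?_
    simp [norm_cpow_eq_rpow_re_of_pos hx.1]
  have hsummable : Summable fun n => ∫ x in Ioc 0 1, ‖F n x‖ := by
    have := ((summable_nat_add_iff 1).2 (Real.summable_one_div_nat_rpow.2 hs)).mul_left
      (θ ^ s.re / s.re)
    refine this.congr fun n => ?_
    rw [hnorm, Real.div_rpow hθ0.le (by positivity)]
    push_cast
    ring
  calc ∫ x in Ioc 0 1, ⌊θ / x⌋₊ • (x : ℂ) ^ (s - 1)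
      = ∫ x in Ioc 0 1, ∑' n, F n x := by
        simp only [hF, hc, tsum_indicator_Ioc_div_natCast_add_one hθ0.le]
    _ = ∑' n, (c n : ℂ) ^ s / s := by
        rw [← integral_tsum_of_summable_integral_norm hint hsummable]
        simp_rw [hintegral]
    _ = riemannZeta s * (θ : ℂ) ^ s / s := by
        have hterm n : (c n : ℂ) ^ s / s = (θ : ℂ) ^ s / s * (1 / ((n : ℂ) + 1) ^ s) := by
          rw [hc, ofReal_div, div_cpow_ofReal_nonneg hθ0.le (by positivity)]
          push_cast
          ring
        rw [tsum_congr hterm, tsum_mul_left, ← zeta_eq_tsum_one_div_nat_add_one_cpow hs]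
        ring

@[fun_prop]
lemma measurable_fract_div (θ : ℝ) : Measurable fun x : ℝ => Int.fract (θ / x) :=
  measurable_fract.comp (measurable_const.div measurable_id)

lemma integrableOn_fract_div_smul_cpow (θ : ℝ) {s : ℂ} (hs : 0 < s.re) :
    IntegrableOn (fun x : ℝ => Int.fract (θ / x) • (x : ℂ) ^ (s - 1)) (Ioc 0 1) :=
  (integrableOn_Ioc_cpow_sub_one hs).bdd_smul (φ := fun x => Int.fract (θ / x)) 1
    (measurable_fract_div θ).aestronglyMeasurable
    (ae_of_all _ fun x => by simpa [Int.abs_fract] using (Int.fract_lt_one (θ / x)).le)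

lemma setIntegral_fract_div_smul_cpow {θ : ℝ} (hθ0 : 0 < θ) (hθ1 : θ ≤ 1) {s : ℂ}
    (hs : 1 < s.re) :
    ∫ x in Ioc 0 1, Int.fract (θ / x) • (x : ℂ) ^ (s - 1)
      = θ / (s - 1) - riemannZeta s * (θ : ℂ) ^ s / s := by
  have hs1 : 0 < (s - 1).re := by simpa using hs
  have hpt : ∀ x ∈ Ioc (0 : ℝ) 1,
      θ • (x : ℂ) ^ (s - 1 - 1) - Int.fract (θ / x) • (x : ℂ) ^ (s - 1)
        = ⌊θ / x⌋₊ • (x : ℂ) ^ (s - 1) := by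
    intro x hx
    have hx0 : (x : ℂ) ≠ 0 := ofReal_ne_zero.2 hx.1.ne'
    rw [cpow_sub _ _ hx0, cpow_one, ← Int.self_sub_floor,
      ← natCast_floor_eq_intCast_floor (div_nonneg hθ0.le hx.1.le), ← Nat.cast_smul_eq_nsmul ℝ]
    simp only [real_smul]
    push_cast
    field_simp
    ring
  have hmain : IntegrableOn (fun x : ℝ => θ • (x : ℂ) ^ (s - 1 - 1)) (Ioc 0 1) :=
    (integrableOn_Ioc_cpow_sub_one hs1).smul θ
  have hsplit := integral_sub hmain (integrableOn_fract_div_smul_cpow θ (s := s) (by linarith))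
  rw [setIntegral_congr_fun measurableSet_Ioc hpt, setIntegral_natFloor_div_smul_cpow hθ0 hθ1 hs,
    integral_smul, integral_Ioc_cpow_sub_one hs1 zero_le_one] at hsplit
  simp only [ofReal_one, one_cpow, real_smul] at hsplit
  linear_combination hsplit

noncomputable def nbKernel (θ : ℝ) : ℝ → ℂ :=
  (Ioc 0 1).indicator fun x => ((Int.fract (θ / x) : ℝ) : ℂ)

lemma norm_nbKernel_le (θ x : ℝ) : ‖nbKernel θ x‖ ≤ 1 := by
  by_cases hx : x ∈ Ioc 0 1
  · simpa [nbKernel, hx, Int.abs_fract] using (Int.fract_lt_one (θ / x)).le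
  · simp [nbKernel, hx]

lemma integrable_nbKernel (θ : ℝ) : Integrable (nbKernel θ) :=
  (Measure.integrableOn_of_bounded measure_Ioc_lt_top.ne
    (Complex.measurable_ofReal.comp (measurable_fract_div θ)).aestronglyMeasurable
    (M := 1) (ae_of_all _ fun x => by
      simpa [Int.abs_fract] using (Int.fract_lt_one (θ / x)).le)).integrable_indicator
    measurableSet_Ioc

lemma mellin_nbKernel (θ : ℝ) (s : ℂ) :
    mellin (nbKernel θ) s = ∫ x in Ioc 0 1, Int.fract (θ / x) • (x : ℂ) ^ (s - 1) := by
  have hmul (x : ℝ) : (x : ℂ) ^ (s - 1) • nbKernel θ x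
      = (Ioc 0 1).indicator (fun x => Int.fract (θ / x) • (x : ℂ) ^ (s - 1)) x := by
    by_cases hx : x ∈ Ioc 0 1 <;> simp [nbKernel, hx, mul_comm]
  simp only [mellin, hmul]
  rw [setIntegral_indicator measurableSet_Ioc, inter_eq_right.2 Ioc_subset_Ioi_self]

lemma differentiableAt_mellin_nbKernel (θ : ℝ) {s : ℂ} (hs : 0 < s.re) :
    DifferentiableAt ℂ (mellin (nbKernel θ)) s := by
  refine mellin_differentiableAt_of_isBigO_rpow (a := s.re + 1) (b := 0)
    ((integrable_nbKernel θ).locallyIntegrable.locallyIntegrableOn _) ?_ (by linarith) ?_ hs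
  · refine (Asymptotics.isBigO_zero _ _).congr' ?_ EventuallyEq.rfl
    filter_upwards [eventually_gt_atTop 1] with x hx
    simp [nbKernel, hx.not_ge]
  · refine Asymptotics.IsBigO.of_bound 1 (Eventually.of_forall fun x => ?_)
    simpa using norm_nbKernel_le θ x

/-- Multiplying by `s - 1` turns `ζ` into the entire function `riemannZeta₁`, so the identity of
`setIntegral_fract_div_smul_cpow` continues to the whole (convex) half-plane `0 < Re s`. -/
lemma mellin_nbKernel_eq {θ : ℝ} (hθ0 : 0 < θ) (hθ1 : θ ≤ 1) {s : ℂ} (hs0 : 0 < s.re)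
    (hs1 : s ≠ 1) :
    mellin (nbKernel θ) s = θ / (s - 1) - riemannZeta s * (θ : ℂ) ^ s / s := by
  have hθ : (θ : ℂ) ≠ 0 := ofReal_ne_zero.2 hθ0.ne'
  set U : Set ℂ := {s | 0 < s.re}
  have hUopen : IsOpen U := isOpen_lt continuous_const continuous_re
  have hLHS : AnalyticOnNhd ℂ (fun s => (s - 1) * mellin (nbKernel θ) s) U :=
    DifferentiableOn.analyticOnNhd (fun s hs => ((differentiableAt_id.sub_const 1).mul
      (differentiableAt_mellin_nbKernel θ hs)).differentiableWithinAt) hUopen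
  have hRHS : AnalyticOnNhd ℂ (fun s => θ - riemannZeta₁ s * (θ : ℂ) ^ s / s) U := by
    refine DifferentiableOn.analyticOnNhd
      (fun s hs => DifferentiableAt.differentiableWithinAt ?_) hUopen
    have hs : s ≠ 0 := by rintro rfl; simp [U] at hs
    exact (differentiableAt_const _).sub (((differentiable_riemannZeta₁ s).mul
      (differentiableAt_id.const_cpow (Or.inl hθ))).div differentiableAt_id hs)
  have hEq := hLHS.eqOn_of_preconnected_of_eventuallyEq hRHS
    (convex_halfSpace_re_gt 0).isPreconnected (z₀ := 2) (by simp [U]) ?_ hs0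
  · rw [riemannZeta_eq_inv_sub_mul hs1]
    have : s - 1 ≠ 0 := sub_ne_zero.2 hs1
    field_simp
    linear_combination hEq
  · filter_upwards [(isOpen_lt continuous_const continuous_re).mem_nhds
      (show (1 : ℝ) < (2 : ℂ).re by norm_num)] with s hs
    have : s - 1 ≠ 0 := sub_ne_zero.2 (by rintro rfl; simp at hs)
    rw [mellin_nbKernel, setIntegral_fract_div_smul_cpow hθ0 hθ1 hs,
      riemannZeta_eq_inv_sub_mul (sub_ne_zero.1 this)]
    field_simp

lemma enorm_integral_smul_le_eLpNorm_mul_eLpNorm {α E : Type*} [MeasurableSpace α]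
    {μ : Measure α} [NormedAddCommGroup E] [NormedSpace ℝ E] {p q : ENNReal} [p.HolderTriple q 1]
    {f : α → ℝ} {g : α → E} (hf : AEStronglyMeasurable f μ) (hg : AEStronglyMeasurable g μ) :
    ‖∫ x, f x • g x ∂μ‖ₑ ≤ eLpNorm f p μ * eLpNorm g q μ :=
  (enorm_integral_le_lintegral_enorm _).trans <| eLpNorm_one_eq_lintegral_enorm.symm.trans_le <|
    eLpNorm_smul_le_mul_eLpNorm hg hf

lemma memLp_two_cpow_sub_one {z : ℂ} (hz : 1 / 2 < z.re) :
    MemLp (fun x : ℝ => (x : ℂ) ^ (z - 1)) 2 (volume.restrict (Ioo 0 1)) := by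
  rw [memLp_two_iff_integrable_sq_norm (Measurable.aestronglyMeasurable (by fun_prop))]
  refine ((intervalIntegral.integrableOn_Ioo_rpow_iff zero_lt_one).2
    (show -1 < 2 * z.re - 2 by linarith)).congr_fun (fun x hx => ?_) measurableSet_Ioo
  rw [norm_cpow_eq_rpow_re_of_pos hx.1, ← Real.rpow_natCast, ← Real.rpow_mul hx.1.le]
  simp
  ring_nf

lemma setIntegral_one_sub_sum_fract_div_smul_cpow {z : ℂ} (hz0 : 0 < z.re) (hz1 : z ≠ 1)
    (hζ : riemannZeta z = 0) {m : ℕ} {c β : Fin m → ℝ} (hβ : ∀ i, β i ∈ Ioc 0 1)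
    (hsum : ∑ i, c i * β i = 0) :
    ∫ x in Ioo 0 1, (1 - ∑ i, c i * Int.fract (β i / x)) • (x : ℂ) ^ (z - 1) = z⁻¹ := by
  have hkernel i :
      IntegrableOn (fun x : ℝ => Int.fract (β i / x) • (x : ℂ) ^ (z - 1)) (Ioo 0 1) :=
    (integrableOn_fract_div_smul_cpow (β i) hz0).mono_set Ioo_subset_Ioc_self
  have hkernel_eq i :
      ∫ x in Ioo 0 1, Int.fract (β i / x) • (x : ℂ) ^ (z - 1) = β i / (z - 1) := by
    rw [← integral_Ioc_eq_integral_Ioo, ← mellin_nbKernel,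
      mellin_nbKernel_eq (hβ i).1 (hβ i).2 hz0 hz1, hζ]
    ring
  have hterm i : IntegrableOn (fun x : ℝ => c i • Int.fract (β i / x) • (x : ℂ) ^ (z - 1))
      (Ioo 0 1) := (hkernel i).smul (c i)
  simp only [sub_smul, one_smul, Finset.sum_smul, mul_smul]
  rw [integral_sub ((integrableOn_Ioc_cpow_sub_one hz0).mono_set Ioo_subset_Ioc_self)
      (integrable_finsetSum _ fun i _ => hterm i),
    integral_finsetSum _ fun i _ => hterm i, ← integral_Ioc_eq_integral_Ioo,
    integral_Ioc_cpow_sub_one hz0 zero_le_one]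
  have hcomb : ((∑ i, c i * β i : ℝ) : ℂ) = 0 := by rw [hsum, ofReal_zero]
  push_cast at hcomb
  simp only [integral_smul, hkernel_eq]
  simp only [real_smul, ← mul_div_assoc, ← Finset.sum_div, hcomb]
  simp

/-- If the Nyman–Beurling class is dense in `L²(0,1)`, then `ζ(z) ≠ 0` for
`Re z > 1/2`. -/
theorem nb_dense_imp_zero_free
    (hdense : ∀ g : ℝ → ℝ, MemLp g 2 (volume.restrict (Ioo (0:ℝ) 1)) →
      ∀ ε > (0:ℝ), ∃ (m : ℕ) (c β : Fin m → ℝ), 1 ≤ m ∧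
        (∀ i, β i ∈ Ioo (0:ℝ) 1) ∧ (∑ i, c i * β i = 0) ∧
        eLpNorm (fun x => g x - ∑ i, c i * Int.fract (β i / x)) 2
            (volume.restrict (Ioo (0:ℝ) 1)) < ENNReal.ofReal ε)
    (z : ℂ) (hz : 1 / 2 < z.re) :
    riemannZeta z ≠ 0 := by
  intro hζ
  have hz0 : 0 < z.re := by linarith
  have hz1 : z ≠ 1 := by rintro rfl; exact riemannZeta_ne_zero_of_one_le_re (by simp) hζ
  set W := eLpNorm (fun x : ℝ => (x : ℂ) ^ (z - 1)) 2 (volume.restrict (Ioo (0:ℝ) 1))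
  have hbound : ∀ ε > (0:ℝ), ‖z⁻¹‖ₑ ≤ ENNReal.ofReal ε * W := by
    intro ε hε
    obtain ⟨m, c, β, -, hβ, hsum, happrox⟩ := hdense 1 (memLp_const 1) ε hε
    rw [← setIntegral_one_sub_sum_fract_div_smul_cpow hz0 hz1 hζ
      (fun i => Ioo_subset_Ioc_self (hβ i)) hsum]
    exact (enorm_integral_smul_le_eLpNorm_mul_eLpNorm
      (Measurable.aestronglyMeasurable (by fun_prop))
      (Measurable.aestronglyMeasurable (by fun_prop))).trans (mul_le_mul_left happrox.le W)
  have hlim : Tendsto (fun ε : ℝ => ENNReal.ofReal ε * W) (𝓝[>] 0) (𝓝 0) := by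
    have h := ENNReal.Tendsto.mul_const (ENNReal.tendsto_ofReal (tendsto_id (x := 𝓝 (0 : ℝ))))
      (Or.inr (memLp_two_cpow_sub_one hz).eLpNorm_ne_top)
    simpa using h.mono_left nhdsWithin_le_nhds
  have hzero : ‖z⁻¹‖ₑ ≤ 0 := ge_of_tendsto hlim (eventually_nhdsWithin_of_forall hbound)
  have hz_ne : z ≠ 0 := by rintro rfl; simp at hz0
  simp [hz_ne] at hzero
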